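/- Let A = {A_ij} be a family of complex n×n matrices, not strongly reducible in the coupled sense, with D(A) strongly connected. If the n×n complex matrices X_i satisfy A_ij X_j = X_i A_ij for all i,j ∈ I, and each X_i has an eigenvalue (automatic over ℂ), then there is a scalar α with X_i = α I_n for all i. -/
import Mathlib


open Matrix

/-- `A` is strongly reducible in the coupled sense over `ℂ`. -/
def CoupledStronglyReducible {I : Type*} {n : ℕ}
    (A : I → I → Matrix (Fin n) (Fin n) ℂ) : Prop :=
  ∃ U : I → Submodule ℂ (Fin n → ℂ),
    (∀ i, U i ≠ ⊥ ∧ U i ≠ ⊤) ∧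
    ∀ i j, (U j).map (A i j).mulVecLin ≤ U i

/-- The edge relation of `D(A)`: `i → j` iff `A i j` is injective as a linear map. -/
def DigraphEdge {I : Type*} {n : ℕ}
    (A : I → I → Matrix (Fin n) (Fin n) ℂ) (i j : I) : Prop :=
  Function.Injective (A i j).mulVecLin

lemma eq_smul_one_of_mulVec {n : ℕ} (X : Matrix (Fin n) (Fin n) ℂ) (α : ℂ)
    (h : ∀ v, X *ᵥ v = α • v) : X = α • 1 := by
  ext i j
  have := congrFun (h (Pi.single j 1)) i
  simpa [Matrix.mulVec_single, Matrix.one_apply, Pi.single_apply, eq_comm] using this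

/-- Case `A = B` of the strong-reducibility coupled Schur's Lemma over `ℂ`: the
intertwiners `X i` are all the same scalar multiple of the identity. -/
theorem stmt_10 {I : Type*} {n : ℕ}
    (A : I → I → Matrix (Fin n) (Fin n) ℂ)
    (hA : ¬ CoupledStronglyReducible A)
    (hDA : ∀ i j : I, Relation.ReflTransGen (DigraphEdge A) i j)
    (X : I → Matrix (Fin n) (Fin n) ℂ)
    (hX : ∀ i j, A i j * X j = X i * A i j) :
    ∃ α : ℂ, ∀ i, X i = α • (1 : Matrix (Fin n) (Fin n) ℂ) := by
  rcases isEmpty_or_nonempty I with hI | hI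
  · exact ⟨0, fun i => (hI.elim i)⟩
  rcases Nat.eq_zero_or_pos n with hn | hn
  · subst hn; exact ⟨0, fun i => Subsingleton.elim _ _⟩
  obtain ⟨i₀⟩ := hI
  haveI : Nontrivial (Fin n → ℂ) := by
    have : Nonempty (Fin n) := ⟨⟨0, hn⟩⟩
    infer_instance
  obtain ⟨α, hα⟩ := Module.End.exists_eigenvalue ((X i₀).mulVecLin)
  set U : I → Submodule ℂ (Fin n → ℂ) :=
    fun i => Module.End.eigenspace (X i).mulVecLin α with hU
  have hmem : ∀ i (v : Fin n → ℂ), v ∈ U i ↔ X i *ᵥ v = α • v := by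
    intro i v
    rw [hU]
    simp [Module.End.mem_eigenspace_iff, Matrix.mulVecLin_apply]
  have hmap : ∀ i j, (U j).map (A i j).mulVecLin ≤ U i := by
    intro i j x hx
    obtain ⟨v, hv, rfl⟩ := hx
    replace hv : v ∈ U j := hv
    rw [hmem] at hv ⊢
    rw [Matrix.mulVecLin_apply, Matrix.mulVec_mulVec, ← hX i j,
      ← Matrix.mulVec_mulVec, hv, Matrix.mulVec_smul]
  have hU0 : U i₀ ≠ ⊥ := by
    obtain ⟨v, hv⟩ := hα.exists_hasEigenvector
    exact Submodule.ne_bot_iff _ |>.2 ⟨v, hv.1, hv.2⟩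
  have hstep : ∀ i j, DigraphEdge A i j → U j ≠ ⊥ → U i ≠ ⊥ := by
    intro i j he hj
    obtain ⟨v, hv, hv0⟩ := Submodule.ne_bot_iff _ |>.1 hj
    refine Submodule.ne_bot_iff _ |>.2 ⟨(A i j).mulVecLin v, hmap i j ⟨v, hv, rfl⟩, ?_⟩
    intro h0
    exact hv0 (he (by simpa using h0))
  have hall : ∀ i, U i ≠ ⊥ := by
    intro i
    induction hDA i i₀ using Relation.ReflTransGen.head_induction_on with
    | refl => exact hU0
    | head he _ ih => exact hstep _ _ he ih
  have hex : ∃ i, U i = ⊤ := by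
    by_contra h
    push_neg at h
    exact hA ⟨U, fun i => ⟨hall i, h i⟩, hmap⟩
  obtain ⟨k, hk⟩ := hex
  have hXk : X k = α • 1 := by
    apply eq_smul_one_of_mulVec
    intro v
    exact (hmem k v).1 (hk ▸ Submodule.mem_top)
  refine ⟨α, fun j => ?_⟩
  induction hDA k j with
  | refl => exact hXk
  | tail _ he ih =>
    rename_i b c _
    apply eq_smul_one_of_mulVec
    intro v
    apply he
    simp only [Matrix.mulVecLin_apply, Matrix.mulVec_mulVec, hX b c, ih,
      smul_mul_assoc, one_mul, Matrix.smul_mulVec, Matrix.mulVec_smul]
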